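/- Let l ≥ 1 be an odd integer and b₁ ∈ ℝ. In ℝ^{2l+4}, with standard basis vectors e₁, …, e_{2l+4}, the 2l + 3 vectors e₁, e₁ + b₁·e_{2l+4}, e_{l+3}, together with e_{j+1} + e_{j+3} for j = 0, 1, …, l − 1 and e_{l+3+j} + e_{l+5+j} for j = 0, 1, …, l − 1, are linearly dependent. -/

import Mathlib

/-- The family of `2l + 3` vectors `e₁`, `e₁ + b₁·e_{2l+4}`, `e_{l+3}`,
`e_{j+1} + e_{j+3}` (`j = 0, …, l−1`) and `e_{l+3+j} + e_{l+5+j}` (`j = 0, …, l−1`)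
in `ℝ^{2l+4}` (standard basis indexed from `0`). -/
def vecFamily (l : ℕ) (b₁ : ℝ) : Fin (2 * l + 3) → (Fin (2 * l + 4) → ℝ) := fun j =>
  if (j : ℕ) = 0 then
    (Pi.single (0 : Fin (2 * l + 4)) (1 : ℝ) : Fin (2 * l + 4) → ℝ)
  else if (j : ℕ) = 1 then
    (Pi.single (0 : Fin (2 * l + 4)) (1 : ℝ) : Fin (2 * l + 4) → ℝ)
      + b₁ • (Pi.single (Fin.last (2 * l + 3)) (1 : ℝ) : Fin (2 * l + 4) → ℝ)
  else if (j : ℕ) = 2 then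
    (Pi.single (⟨l + 2, by omega⟩ : Fin (2 * l + 4)) (1 : ℝ) : Fin (2 * l + 4) → ℝ)
  else if (j : ℕ) < l + 3 then
    (Pi.single (⟨(j : ℕ) - 3, by have := j.isLt; omega⟩ : Fin (2 * l + 4)) (1 : ℝ)
        : Fin (2 * l + 4) → ℝ)
      + (Pi.single (⟨(j : ℕ) - 1, by have := j.isLt; omega⟩ : Fin (2 * l + 4)) (1 : ℝ)
        : Fin (2 * l + 4) → ℝ)
  else
    (Pi.single (⟨(j : ℕ) - 1, by have := j.isLt; omega⟩ : Fin (2 * l + 4)) (1 : ℝ)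
        : Fin (2 * l + 4) → ℝ)
      + (Pi.single (⟨(j : ℕ) + 1, by have := j.isLt; omega⟩ : Fin (2 * l + 4)) (1 : ℝ)
        : Fin (2 * l + 4) → ℝ)

/-!
The second vector minus the first is `b₁ e_{2l+4}`, so it suffices that `e_{2l+4}` lies in the span
of the vectors other than the second. For odd `l` the indices `l + 3, l + 5, …, 2l + 4` form a
chain of step `2`; the alternating sum of the members `e_{l+3+2i} + e_{l+5+2i}` of the family
telescopes to `e_{l+3} ± e_{2l+4}`, and `e_{l+3}` is the third vector.
-/

open Finset Submodule

section AlternatingChain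

variable {R M : Type*} [CommRing R] [AddCommGroup M] [Module R M]

theorem sum_range_neg_one_pow_smul_add_succ (x : ℕ → M) (n : ℕ) :
    ∑ i ∈ range n, (-1 : R) ^ i • (x i + x (i + 1)) = x 0 - (-1 : R) ^ n • x n := by
  induction n with
  | zero => simp
  | succ n ih =>
    rw [sum_range_succ, ih, pow_succ]
    module

theorem mem_span_insert_image_add_succ (x : ℕ → M) (n : ℕ) :
    x n ∈ span R (insert (x 0) ((fun i => x i + x (i + 1)) '' Set.Iio n)) := by
  set T := span R (insert (x 0) ((fun i => x i + x (i + 1)) '' Set.Iio n))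
  have hx₀ : x 0 ∈ T := subset_span (Set.mem_insert _ _)
  have hsum : x 0 - (-1 : R) ^ n • x n ∈ T := by
    rw [← sum_range_neg_one_pow_smul_add_succ]
    refine sum_mem fun i hi => smul_mem _ _ (subset_span ?_)
    exact Set.mem_insert_of_mem _ ⟨i, by simpa using hi, rfl⟩
  have hxn : x n = (-1 : R) ^ n • (x 0 - (x 0 - (-1 : R) ^ n • x n)) := by
    rw [sub_sub_cancel, smul_smul, ← pow_add, ← two_mul, pow_mul]
    simp
  rw [hxn]
  exact smul_mem _ _ (sub_mem hx₀ hsum)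

end AlternatingChain

theorem Pi.single_mk_eq_ite {α : Type*} [Zero α] {N n : ℕ} (h : n < N) (a : α) :
    Pi.single (⟨n, h⟩ : Fin N) a = fun k : Fin N => if (k : ℕ) = n then a else 0 := by
  ext k
  simp [Pi.single_apply, Fin.ext_iff]

section vecFamily

variable (l : ℕ) (b₁ : ℝ)

theorem vecFamily_zero : vecFamily l b₁ ⟨0, by omega⟩ = Pi.single 0 1 := by
  simp [vecFamily]

theorem vecFamily_one :
    vecFamily l b₁ ⟨1, by omega⟩ = Pi.single 0 1 + b₁ • Pi.single (Fin.last (2 * l + 3)) 1 := by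
  simp [vecFamily]

theorem vecFamily_two :
    vecFamily l b₁ ⟨2, by omega⟩ =
      fun k : Fin (2 * l + 4) => if (k : ℕ) = l + 2 then 1 else 0 := by
  simp [vecFamily, Pi.single_mk_eq_ite]

theorem vecFamily_of_le {j : ℕ} (hj : l + 3 ≤ j) (hj' : j < 2 * l + 3) :
    vecFamily l b₁ ⟨j, hj'⟩ =
      (fun k : Fin (2 * l + 4) => if (k : ℕ) = j - 1 then 1 else 0) +
        fun k : Fin (2 * l + 4) => if (k : ℕ) = j + 1 then 1 else 0 := by
  simp [vecFamily, Pi.single_mk_eq_ite, show j ≠ 0 by omega, show j ≠ 1 by omega,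
    show j ≠ 2 by omega, show ¬ j < l + 3 by omega]

end vecFamily

theorem system_not_linearIndependent_odd_general (l : ℕ) (hlo : Odd l) (b₁ : ℝ) :
    ¬ LinearIndependent ℝ (vecFamily l b₁) := by
  obtain ⟨m, rfl⟩ := hlo
  intro hli
  let S := span ℝ (vecFamily (2 * m + 1) b₁ '' {j | (j : ℕ) ≠ 1})
  -- `x i` is the standard basis vector of index `l + 2 + 2i`, counting from `0`
  let x : ℕ → Fin (2 * (2 * m + 1) + 4) → ℝ := fun i k =>
    if (k : ℕ) = 2 * m + 3 + 2 * i then 1 else 0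
  have hchain : span ℝ (insert (x 0) ((fun i => x i + x (i + 1)) '' Set.Iio (m + 1))) ≤ S := by
    refine span_mono (Set.insert_subset ⟨⟨2, by omega⟩, by simp, vecFamily_two _ _⟩ ?_)
    rintro _ ⟨i, hi, rfl⟩
    simp only [Set.mem_Iio] at hi
    refine ⟨⟨2 * m + 4 + 2 * i, by omega⟩, show 2 * m + 4 + 2 * i ≠ 1 by omega, ?_⟩
    rw [vecFamily_of_le _ _ (by omega), show 2 * m + 4 + 2 * i - 1 = 2 * m + 3 + 2 * i by omega,
      show 2 * m + 4 + 2 * i + 1 = 2 * m + 3 + 2 * (i + 1) by ring]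
  have hlast : x (m + 1) = Pi.single (Fin.last _) 1 := by
    ext k
    simp only [x, Pi.single_apply, Fin.ext_iff, Fin.val_last,
      show 2 * m + 3 + 2 * (m + 1) = 2 * (2 * m + 1) + 3 by ring]
  have hlast_mem : Pi.single (Fin.last _) 1 ∈ S :=
    hlast ▸ hchain (mem_span_insert_image_add_succ x (m + 1))
  refine hli.notMem_span_image (s := {j | (j : ℕ) ≠ 1}) (x := ⟨1, by omega⟩) (by simp) ?_
  rw [vecFamily_one]
  exact add_mem (subset_span ⟨⟨0, by omega⟩, by simp, vecFamily_zero _ _⟩) (smul_mem _ _ hlast_mem)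

theorem system_not_linearIndependent_odd (l : ℕ) (hl : 1 ≤ l) (hlo : Odd l) (b₁ : ℝ) :
    ¬ LinearIndependent ℝ (vecFamily l b₁) :=
  system_not_linearIndependent_odd_general l hlo b₁
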